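/- Let N ≥ 1 and K ≥ 1 be integers, define the base down-chirp s_d[n] = exp( −2πi·( n²/(2NK²) − n/(2K) ) ) for n = 0,…,NK−1, let Δf be a real number, and let m be an integer with 0 ≤ m ≤ NK−1 such that sin( π·(Δf − m/(NK²)) ) ≠ 0. Then the CFO-affected cross-correlation magnitude satisfies (1/(NK)) · | Σ_{n=0}^{NK−m−1} conj(s_d[n]) · s_d[n+m] · exp( 2πi·Δf·(n+m) ) | = (1/(NK)) · | sin( π·(NK − m)·(Δf − m/(NK²)) ) / sin( π·(Δf − m/(NK²)) ) |. -/

import Mathlib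

/-!
Multiplying `s_d[n + m]` by `conj (s_d[n])` cancels the quadratic phase, and the CFO factor only
adds to the linear one, so each summand is a pure tone `exp (2πi (c + n θ))` with
`θ = Δf - m / (NK²)`. The sum is then a geometric series whose modulus is the Dirichlet kernel
`|sin (π L θ) / sin (π θ)|` for `L = NK - m` terms.
-/

open Real Complex Finset

/-- The base down-chirp with chip number `N`, oversampling factor `K`, and `NK` samples:
`s_d[n] = exp(-2πi (n²/(2NK²) - n/(2K)))`. -/
noncomputable def baseDownChirp (N K n : ℕ) : ℂ :=
  Complex.exp (-(2 * Real.pi * Complex.I) *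
    ((n : ℂ) ^ 2 / (2 * (N : ℂ) * (K : ℂ) ^ 2) - (n : ℂ) / (2 * (K : ℂ))))

lemma norm_exp_two_pi_mul_I_sub_one (x : ℝ) :
    ‖Complex.exp (2 * π * x * I) - 1‖ = 2 * |Real.sin (π * x)| := by
  have h := Complex.norm_exp_I_mul_ofReal_sub_one (2 * π * x)
  rw [norm_mul, Real.norm_eq_abs, Real.norm_eq_abs, abs_two,
    show 2 * π * x / 2 = π * x by ring] at h
  rw [← h]
  push_cast
  ring_nf

lemma norm_sum_exp_linear_phase (c θ : ℝ) (L : ℕ) (hθ : Real.sin (π * θ) ≠ 0) :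
    ‖∑ n ∈ range L, Complex.exp (2 * π * (c + n * θ) * I)‖
      = |Real.sin (π * (L * θ)) / Real.sin (π * θ)| := by
  set z := Complex.exp (2 * π * θ * I)
  have hsummand (n : ℕ) : Complex.exp (2 * π * (c + n * θ) * I)
      = Complex.exp (2 * π * c * I) * z ^ n := by
    rw [← Complex.exp_nat_mul, ← Complex.exp_add]
    ring_nf
  have hzL : z ^ L = Complex.exp (2 * π * (L * θ : ℝ) * I) := by
    rw [← Complex.exp_nat_mul]
    push_cast
    ring_nf
  have hz : z ≠ 1 := by
    intro h
    have := norm_exp_two_pi_mul_I_sub_one θ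
    simp_all [z]
  have hc : ‖Complex.exp (2 * π * c * I)‖ = 1 := by
    simpa using Complex.norm_exp_ofReal_mul_I (2 * π * c)
  rw [sum_congr rfl fun n _ => hsummand n, ← mul_sum, geom_sum_eq hz, norm_mul, hc, one_mul,
    norm_div, hzL, norm_exp_two_pi_mul_I_sub_one, norm_exp_two_pi_mul_I_sub_one,
    mul_div_mul_left _ _ two_ne_zero, abs_div]

lemma conj_baseDownChirp_mul_baseDownChirp_add_mul_exp (N K n m : ℕ) (Δf : ℝ) :
    (starRingEnd ℂ) (baseDownChirp N K n) * baseDownChirp N K (n + m) *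
        Complex.exp (2 * π * I * Δf * (n + m))
      = Complex.exp (2 * π * ((Δf * m - m ^ 2 / (2 * N * K ^ 2) + m / (2 * K) : ℝ)
          + n * (Δf - m / (N * K ^ 2) : ℝ)) * I) := by
  unfold baseDownChirp
  rw [← Complex.exp_conj, ← Complex.exp_add, ← Complex.exp_add]
  congr 1
  simp only [map_mul, map_neg, map_sub, map_div₀, map_pow, map_ofNat, Complex.conj_I,
    Complex.conj_ofReal, Complex.conj_natCast]
  push_cast
  ring

theorem downchirp_crosscorrelation_cfo_general (N K : ℕ)
    (Δf : ℝ) (m : ℕ) (hm : m ≤ N * K - 1)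
    (hsin : Real.sin (Real.pi * (Δf - m / ((N : ℝ) * K ^ 2))) ≠ 0) :
    (1 / ((N : ℝ) * K)) *
      ‖∑ n ∈ Finset.range (N * K - m),
        (starRingEnd ℂ) (baseDownChirp N K n) * baseDownChirp N K (n + m) *
          Complex.exp (2 * Real.pi * Complex.I * (Δf : ℂ) * ((n : ℂ) + (m : ℂ)))‖ =
    (1 / ((N : ℝ) * K)) *
      |Real.sin (Real.pi * ((N : ℝ) * K - m) * (Δf - m / ((N : ℝ) * K ^ 2))) /
        Real.sin (Real.pi * (Δf - m / ((N : ℝ) * K ^ 2)))| := by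
  have hL : ((N * K - m : ℕ) : ℝ) = N * K - m := by
    rw [Nat.cast_sub (by omega), Nat.cast_mul]
  simp_rw [conj_baseDownChirp_mul_baseDownChirp_add_mul_exp]
  rw [norm_sum_exp_linear_phase _ _ _ hsin, hL, mul_assoc π]

/-- CFO-affected cross-correlation magnitude of the base down-chirp at lag `m`
(timing–frequency coupling): for a normalized CFO `Δf` with
`sin(π(Δf - m/(NK²))) ≠ 0` and `0 ≤ m ≤ NK - 1`,
`(1/(NK)) |Σ_{n=0}^{NK-m-1} conj(s_d[n]) s_d[n+m] e^{2πi Δf (n+m)}|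
  = (1/(NK)) |sin(π(NK-m)(Δf - m/(NK²))) / sin(π(Δf - m/(NK²)))|`. -/
theorem downchirp_crosscorrelation_cfo (N K : ℕ) (hN : 1 ≤ N) (hK : 1 ≤ K)
    (Δf : ℝ) (m : ℕ) (hm : m ≤ N * K - 1)
    (hsin : Real.sin (Real.pi * (Δf - m / ((N : ℝ) * K ^ 2))) ≠ 0) :
    (1 / ((N : ℝ) * K)) *
      ‖∑ n ∈ Finset.range (N * K - m),
        (starRingEnd ℂ) (baseDownChirp N K n) * baseDownChirp N K (n + m) *
          Complex.exp (2 * Real.pi * Complex.I * (Δf : ℂ) * ((n : ℂ) + (m : ℂ)))‖ =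
    (1 / ((N : ℝ) * K)) *
      |Real.sin (Real.pi * ((N : ℝ) * K - m) * (Δf - m / ((N : ℝ) * K ^ 2))) /
        Real.sin (Real.pi * (Δf - m / ((N : ℝ) * K ^ 2)))| :=
  downchirp_crosscorrelation_cfo_general N K Δf m hm hsin
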